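/- Suppose the twice continuously differentiable function f_a : ℝ^{n×m} → ℝ satisfies the δ-RIP_{2r,2s} property and the κ-BDP_{2t} property, and set μ := (1−δ)/2. For a matrix N ∈ ℝ^{(n+m)×(n+m)} written in blocks N = [[N₁₁, N₁₂],[N₂₁, N₂₂]] with N₁₁ ∈ ℝ^{n×n}, N₁₂ ∈ ℝ^{n×m}, N₂₂ ∈ ℝ^{m×m}, define f̃(N) := f_a(N₁₂) + f_a(N₂₁ᵀ), g̃(N) := ‖N₁₁‖_F² + ‖N₂₂‖_F² − ‖N₁₂‖_F² − ‖N₂₁‖_F², and F(N) := f̃(N) + (μ/2)·g̃(N). Then: (i) for every U ∈ ℝ^{n×r}, V ∈ ℝ^{m×r} and W := (U; V) ∈ ℝ^{(n+m)×r}, one has F(WWᵀ) = 2·[f_a(UVᵀ) + (μ/4)‖UᵀU − VᵀV‖_F²], so the regularized asymmetric problem (5) is equivalent to the symmetric problem min_{W ∈ ℝ^{(n+m)×r}} (2/(1+δ))·F(WWᵀ); and (ii) the function (2/(1+δ))·F satisfies the (2δ/(1+δ))-RIP_{2r,2s} property and the (2κ/(1+δ))-BDP_{2t} property. -/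

import Mathlib

open Matrix

attribute [local instance] Matrix.frobeniusSeminormedAddCommGroup
  Matrix.frobeniusNormedAddCommGroup Matrix.frobeniusNormedSpace

/-- Hessian quadratic/bilinear form of `f` at `x`, evaluated at directions `v, w`. -/
noncomputable def hess {E : Type*} [NormedAddCommGroup E] [NormedSpace ℝ E]
    (f : E → ℝ) (x v w : E) : ℝ :=
  iteratedFDeriv ℝ 2 f x ![v, w]

/-- Second-order critical point: vanishing gradient and positive semidefinite Hessian. -/
def IsSOCP {E : Type*} [NormedAddCommGroup E] [NormedSpace ℝ E]
    (f : E → ℝ) (x : E) : Prop :=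
  fderiv ℝ f x = 0 ∧ ∀ v : E, 0 ≤ hess f x v v

/-- The `δ`-RIP₂ᵣ,₂ₜ property (Frobenius norm). -/
def RIP {I J : Type*} [Fintype I] [Fintype J]
    (r t : ℕ) (δ : ℝ) (f : Matrix I J ℝ → ℝ) : Prop :=
  ∀ M K : Matrix I J ℝ, M.rank ≤ 2 * r → K.rank ≤ 2 * t →
    (1 - δ) * ‖K‖ ^ 2 ≤ hess f M K K ∧ hess f M K K ≤ (1 + δ) * ‖K‖ ^ 2

/-- The `κ`-BDP₂ₜ property. -/
def BDP {I J : Type*} [Fintype I] [Fintype J]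
    (t : ℕ) (κ : ℝ) (f : Matrix I J ℝ → ℝ) : Prop :=
  ∀ M M' K L : Matrix I J ℝ, M.rank ≤ 2 * t → M'.rank ≤ 2 * t →
    K.rank ≤ 2 * t → L.rank ≤ 2 * t →
    |hess f M K L - hess f M' K L| ≤ κ * ‖K‖ * ‖L‖

/-- Gradient of `f` at `M`, as a matrix (w.r.t. the Frobenius inner product). -/
noncomputable def mgrad {I J : Type*} [Fintype I] [Fintype J] [DecidableEq I] [DecidableEq J]
    (f : Matrix I J ℝ → ℝ) (M : Matrix I J ℝ) : Matrix I J ℝ :=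
  Matrix.of fun i j => fderiv ℝ f M (Matrix.single i j 1)

/-- Trace inner product `⟨X, Y⟩ = tr(Xᵀ Y)` of matrices. -/
noncomputable def minner {I J : Type*} [Fintype I] [Fintype J]
    (X Y : Matrix I J ℝ) : ℝ :=
  Matrix.trace (Xᵀ * Y)

/-- Objective of the factorized asymmetric problem (3). -/
noncomputable def ha {n m r : ℕ} (f : Matrix (Fin n) (Fin m) ℝ → ℝ)
    (p : Matrix (Fin n) (Fin r) ℝ × Matrix (Fin m) (Fin r) ℝ) : ℝ :=
  f (p.1 * p.2ᵀ)

/-- Objective of the regularized asymmetric problem (5). -/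
noncomputable def rhoA {n m r : ℕ} (f : Matrix (Fin n) (Fin m) ℝ → ℝ) (μ : ℝ)
    (p : Matrix (Fin n) (Fin r) ℝ × Matrix (Fin m) (Fin r) ℝ) : ℝ :=
  f (p.1 * p.2ᵀ) + μ / 4 * ‖p.1ᵀ * p.1 - p.2ᵀ * p.2‖ ^ 2

/-- Objective of the symmetric factorized problem (4). -/
noncomputable def hs {n r : ℕ} (f : Matrix (Fin n) (Fin n) ℝ → ℝ)
    (U : Matrix (Fin n) (Fin r) ℝ) : ℝ :=
  f (U * Uᵀ)


/-- The symmetric lift `F(N) = f̃(N) + (μ/2)·g̃(N)` of the asymmetric objective. -/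
noncomputable def tilF {n m : ℕ} (f : Matrix (Fin n) (Fin m) ℝ → ℝ) (μ : ℝ)
    (N : Matrix (Fin n ⊕ Fin m) (Fin n ⊕ Fin m) ℝ) : ℝ :=
  (f N.toBlocks₁₂ + f N.toBlocks₂₁ᵀ) +
    μ / 2 * (‖N.toBlocks₁₁‖ ^ 2 + ‖N.toBlocks₂₂‖ ^ 2 - ‖N.toBlocks₁₂‖ ^ 2 - ‖N.toBlocks₂₁‖ ^ 2)

/-!
On `W Wᵀ` the lift only sees the off-diagonal blocks `U Vᵀ` and `(V Uᵀ)ᵀ = U Vᵀ` and the Gram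
blocks, so part (i) is the balancing identity
`‖Uᵀ U - Vᵀ V‖² = ‖U Uᵀ‖² + ‖V Vᵀ‖² - 2 ‖U Vᵀ‖²`.

The Hessian of the lift at `N` in directions `K, L` is the Hessian of `f` at `N₁₂` plus that at
`N₂₁ᵀ`, plus the constant form `μ (⟨K₁₁, L₁₁⟩ + ⟨K₂₂, L₂₂⟩ - ⟨K₁₂, L₁₂⟩ - ⟨K₂₁, L₂₁⟩)`. Blocks
have rank at most that of the whole matrix, so the RIP of `f` applies to the off-diagonal
blocks; with `μ = (1 - δ) / 2` the Hessian at `(K, K)` then lies between `(1 - δ) / 2 ‖K‖²`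
and `(1 + 3δ) / 2 ‖K‖²`, and rescaling by `2 / (1 + δ)` centres it at `‖K‖²`. The constant form
cancels in Hessian differences, and Cauchy–Schwarz over the two off-diagonal blocks gives the
BDP constant.
-/

open scoped InnerProductSpace

section Hessian

variable {E F : Type*} [NormedAddCommGroup E] [NormedSpace ℝ E]
  [NormedAddCommGroup F] [NormedSpace ℝ F] {f g : E → ℝ}

lemma hess_add (hf : ContDiff ℝ 2 f) (hg : ContDiff ℝ 2 g) (x v w : E) :
    hess (fun y => f y + g y) x v w = hess f x v w + hess g x v w := by
  simp only [hess, fun_iteratedFDeriv_add_apply hf.contDiffAt hg.contDiffAt]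
  rfl

lemma hess_sub (hf : ContDiff ℝ 2 f) (hg : ContDiff ℝ 2 g) (x v w : E) :
    hess (fun y => f y - g y) x v w = hess f x v w - hess g x v w := by
  simp only [hess, fun_iteratedFDeriv_sub_apply hf.contDiffAt hg.contDiffAt]
  rfl

lemma hess_const_mul (c : ℝ) (hf : ContDiff ℝ 2 f) (x v w : E) :
    hess (fun y => c * f y) x v w = c * hess f x v w := by
  simp only [hess, ← smul_eq_mul, iteratedFDeriv_const_smul_apply' hf.contDiffAt]
  rfl

lemma hess_comp_continuousLinearMap (L : F →L[ℝ] E) (hf : ContDiff ℝ 2 f) (x v w : F) :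
    hess (fun y => f (L y)) x v w = hess f (L x) (L v) (L w) := by
  rw [hess, show (fun y => f (L y)) = f ∘ L from rfl, L.iteratedFDeriv_comp_right hf x le_rfl,
    ContinuousMultilinearMap.compContinuousLinearMap_apply, hess]
  congr 1
  funext i
  fin_cases i <;> rfl

lemma IsLinearMap.contDiff [FiniteDimensional ℝ F] {k : WithTop ℕ∞} {L : F → E}
    (hL : IsLinearMap ℝ L) : ContDiff ℝ k L :=
  (LinearMap.toContinuousLinearMap hL.mk').contDiff

-- Unbundled, so that it rewrites `fun N => f N.toBlocks₁₂` as it stands: a bundled map on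
-- matrices would carry the `Pi` topology and module instances, not the Frobenius ones.
lemma hess_comp_isLinearMap [FiniteDimensional ℝ F] {L : F → E} (hL : IsLinearMap ℝ L)
    (hf : ContDiff ℝ 2 f) (x v w : F) :
    hess (fun y => f (L y)) x v w = hess f (L x) (L v) (L w) :=
  hess_comp_continuousLinearMap (LinearMap.toContinuousLinearMap hL.mk') hf x v w

lemma hess_norm_sq {H : Type*} [NormedAddCommGroup H] [InnerProductSpace ℝ H] (x v w : H) :
    hess (fun y : H => ‖y‖ ^ 2) x v w = 2 * ⟪v, w⟫_ℝ := by
  rw [hess, iteratedFDeriv_two_apply, fderiv_norm_sq, ← FunLike.coe_smul,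
    ContinuousLinearMap.fderiv]
  simp only [Matrix.cons_val_zero, Matrix.cons_val_one, _root_.smul_apply, nsmul_eq_mul]
  rfl

end Hessian

lemma add_mul_le_mul_of_sq_add_sq_le {x₁ x₂ y₁ y₂ X Y : ℝ} (hX : 0 ≤ X) (hY : 0 ≤ Y)
    (hx : x₁ ^ 2 + x₂ ^ 2 ≤ X ^ 2) (hy : y₁ ^ 2 + y₂ ^ 2 ≤ Y ^ 2) :
    x₁ * y₁ + x₂ * y₂ ≤ X * Y := by
  refine le_of_sq_le_sq ?_ (mul_nonneg hX hY)
  nlinarith [sq_nonneg (x₁ * y₂ - x₂ * y₁), sq_nonneg x₁, sq_nonneg x₂, sq_nonneg y₁,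
    sq_nonneg y₂]

namespace Matrix

section Frobenius

variable {I J : Type*} [Fintype I] [Fintype J]

-- The Frobenius norm is defined through `PiLp 2` of `PiLp 2`, so this is an isometry by `rfl`;
-- it supplies the inner product that the Frobenius normed space lacks.
def frobeniusToPiLp : Matrix I J ℝ →ₗᵢ[ℝ] PiLp 2 (fun _ : I => EuclideanSpace ℝ J) where
  toFun A := WithLp.toLp 2 fun i => WithLp.toLp 2 (A i)
  map_add' _ _ := rfl
  map_smul' _ _ := rfl
  norm_map' _ := rfl

@[simp] lemma frobeniusToPiLp_apply (A : Matrix I J ℝ) (i : I) (j : J) :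
    frobeniusToPiLp A i j = A i j := rfl

lemma minner_eq_sum (K L : Matrix I J ℝ) : minner K L = ∑ i, ∑ j, K i j * L i j := by
  simp only [minner, trace, diag_apply, mul_apply, transpose_apply]
  exact Finset.sum_comm

lemma inner_frobeniusToPiLp (K L : Matrix I J ℝ) :
    ⟪frobeniusToPiLp K, frobeniusToPiLp L⟫_ℝ = minner K L := by
  simp [PiLp.inner_apply, minner_eq_sum, mul_comm]

lemma frobenius_norm_sq_eq_minner (K : Matrix I J ℝ) : ‖K‖ ^ 2 = minner K K := by
  rw [← inner_frobeniusToPiLp, real_inner_self_eq_norm_sq, LinearIsometry.norm_map]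

lemma contDiff_frobenius_norm_sq {k : WithTop ℕ∞} :
    ContDiff ℝ k fun X : Matrix I J ℝ => ‖X‖ ^ 2 := by
  convert (contDiff_norm_sq ℝ (E := PiLp 2 fun _ : I => EuclideanSpace ℝ J)).comp
    frobeniusToPiLp.toContinuousLinearMap.contDiff using 1
  funext X
  simp

@[fun_prop]
lemma _root_.ContDiff.frobenius_norm_sq {E : Type*} [NormedAddCommGroup E] [NormedSpace ℝ E]
    {k : WithTop ℕ∞} {g : E → Matrix I J ℝ} (hg : ContDiff ℝ k g) :
    ContDiff ℝ k fun x => ‖g x‖ ^ 2 :=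
  contDiff_frobenius_norm_sq.comp hg

lemma hess_frobenius_norm_sq (X K L : Matrix I J ℝ) :
    hess (fun X : Matrix I J ℝ => ‖X‖ ^ 2) X K L = 2 * minner K L := by
  have h := hess_comp_continuousLinearMap (frobeniusToPiLp (I := I) (J := J)).toContinuousLinearMap
    (contDiff_norm_sq ℝ) X K L
  simp only [LinearIsometry.coe_toContinuousLinearMap, LinearIsometry.norm_map] at h
  rw [h, hess_norm_sq, inner_frobeniusToPiLp]

lemma hess_frobenius_norm_sq_comp {E : Type*} [NormedAddCommGroup E] [NormedSpace ℝ E]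
    [FiniteDimensional ℝ E] {A : E → Matrix I J ℝ} (hA : IsLinearMap ℝ A) (x v w : E) :
    hess (fun y => ‖A y‖ ^ 2) x v w = 2 * minner (A v) (A w) :=
  (hess_comp_isLinearMap hA contDiff_frobenius_norm_sq x v w).trans (hess_frobenius_norm_sq ..)

lemma trace_mul_mul_mul_cycle {p q p' q' : Type*} [Fintype p] [Fintype q] [Fintype p']
    [Fintype q'] (A : Matrix p q ℝ) (B : Matrix q p' ℝ) (C : Matrix p' q' ℝ)
    (D : Matrix q' p ℝ) : trace (A * B * (C * D)) = trace (B * C * (D * A)) := by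
  rw [Matrix.mul_assoc, trace_mul_comm]
  simp only [Matrix.mul_assoc]

lemma frobenius_norm_sq_gram_sub_gram {r : Type*} [Fintype r] (U : Matrix I r ℝ)
    (V : Matrix J r ℝ) :
    ‖Uᵀ * U - Vᵀ * V‖ ^ 2 = ‖U * Uᵀ‖ ^ 2 + ‖V * Vᵀ‖ ^ 2 - 2 * ‖U * Vᵀ‖ ^ 2 := by
  simp only [frobenius_norm_sq_eq_minner, minner, transpose_mul, transpose_transpose,
    transpose_sub, sub_mul, mul_sub, trace_sub]
  rw [trace_mul_mul_mul_cycle U Uᵀ U Uᵀ, trace_mul_mul_mul_cycle V Vᵀ V Vᵀ,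
    trace_mul_mul_mul_cycle V Uᵀ U Vᵀ, trace_mul_comm (Vᵀ * V)]
  ring

end Frobenius

section Blocks

variable {m n m₀ n₀ : Type*}

lemma isLinearMap_toBlocks₁₁ : IsLinearMap ℝ (toBlocks₁₁ : Matrix (m ⊕ n) (m₀ ⊕ n₀) ℝ → _) :=
  ⟨fun _ _ => rfl, fun _ _ => rfl⟩

lemma isLinearMap_toBlocks₁₂ : IsLinearMap ℝ (toBlocks₁₂ : Matrix (m ⊕ n) (m₀ ⊕ n₀) ℝ → _) :=
  ⟨fun _ _ => rfl, fun _ _ => rfl⟩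

lemma isLinearMap_toBlocks₂₁ : IsLinearMap ℝ (toBlocks₂₁ : Matrix (m ⊕ n) (m₀ ⊕ n₀) ℝ → _) :=
  ⟨fun _ _ => rfl, fun _ _ => rfl⟩

lemma isLinearMap_toBlocks₂₂ : IsLinearMap ℝ (toBlocks₂₂ : Matrix (m ⊕ n) (m₀ ⊕ n₀) ℝ → _) :=
  ⟨fun _ _ => rfl, fun _ _ => rfl⟩

lemma isLinearMap_toBlocks₂₁_transpose :
    IsLinearMap ℝ fun N : Matrix (m ⊕ n) (m₀ ⊕ n₀) ℝ => N.toBlocks₂₁ᵀ :=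
  ⟨fun _ _ => rfl, fun _ _ => rfl⟩

section ContDiff

variable [Fintype m] [Fintype n] [Fintype m₀] [Fintype n₀] {k : WithTop ℕ∞}

@[fun_prop]
lemma contDiff_toBlocks₁₁ : ContDiff ℝ k (toBlocks₁₁ : Matrix (m ⊕ n) (m₀ ⊕ n₀) ℝ → _) :=
  isLinearMap_toBlocks₁₁.contDiff

@[fun_prop]
lemma contDiff_toBlocks₁₂ : ContDiff ℝ k (toBlocks₁₂ : Matrix (m ⊕ n) (m₀ ⊕ n₀) ℝ → _) :=
  isLinearMap_toBlocks₁₂.contDiff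

@[fun_prop]
lemma contDiff_toBlocks₂₁ : ContDiff ℝ k (toBlocks₂₁ : Matrix (m ⊕ n) (m₀ ⊕ n₀) ℝ → _) :=
  isLinearMap_toBlocks₂₁.contDiff

@[fun_prop]
lemma contDiff_toBlocks₂₂ : ContDiff ℝ k (toBlocks₂₂ : Matrix (m ⊕ n) (m₀ ⊕ n₀) ℝ → _) :=
  isLinearMap_toBlocks₂₂.contDiff

@[fun_prop]
lemma contDiff_transpose : ContDiff ℝ k (transpose : Matrix m n ℝ → Matrix n m ℝ) :=
  IsLinearMap.contDiff ⟨fun _ _ => rfl, fun _ _ => rfl⟩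

end ContDiff

lemma rank_toBlocks₁₂_le [Fintype m₀] [Fintype n₀] (N : Matrix (m ⊕ n) (m₀ ⊕ n₀) ℝ) :
    N.toBlocks₁₂.rank ≤ N.rank :=
  rank_submatrix_le N Sum.inl Sum.inr

lemma rank_toBlocks₂₁_transpose_le [Fintype n] [Fintype m₀] [Fintype n₀]
    (N : Matrix (m ⊕ n) (m₀ ⊕ n₀) ℝ) : N.toBlocks₂₁ᵀ.rank ≤ N.rank := by
  rw [rank_transpose]
  exact rank_submatrix_le N Sum.inr Sum.inl

variable [Fintype m] [Fintype n]

lemma frobenius_norm_sq_eq_blocks (K : Matrix (m ⊕ n) (m ⊕ n) ℝ) :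
    ‖K‖ ^ 2 = ‖K.toBlocks₁₁‖ ^ 2 + ‖K.toBlocks₁₂‖ ^ 2 + ‖K.toBlocks₂₁‖ ^ 2 +
      ‖K.toBlocks₂₂‖ ^ 2 := by
  simp only [frobenius_norm_sq_eq_minner, minner_eq_sum, Fintype.sum_sum_type, toBlocks₁₁,
    toBlocks₁₂, toBlocks₂₁, toBlocks₂₂, of_apply, Finset.sum_add_distrib]
  ring

lemma norm_toBlocks₁₂_mul_add_norm_toBlocks₂₁_mul_le (K L : Matrix (m ⊕ n) (m ⊕ n) ℝ) :
    ‖K.toBlocks₁₂‖ * ‖L.toBlocks₁₂‖ + ‖K.toBlocks₂₁‖ * ‖L.toBlocks₂₁‖ ≤ ‖K‖ * ‖L‖ := by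
  refine add_mul_le_mul_of_sq_add_sq_le (norm_nonneg K) (norm_nonneg L) ?_ ?_
  · nlinarith [frobenius_norm_sq_eq_blocks K, sq_nonneg ‖K.toBlocks₁₁‖, sq_nonneg ‖K.toBlocks₂₂‖]
  · nlinarith [frobenius_norm_sq_eq_blocks L, sq_nonneg ‖L.toBlocks₁₁‖, sq_nonneg ‖L.toBlocks₂₂‖]

end Blocks

end Matrix

lemma lift_rip_bounds {δ a b c d A B : ℝ} (hδ : 0 ≤ δ) (ha : 0 ≤ a) (hd : 0 ≤ d)
    (hA : (1 - δ) * b ≤ A ∧ A ≤ (1 + δ) * b) (hB : (1 - δ) * c ≤ B ∧ B ≤ (1 + δ) * c) :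
    (1 - 2 * δ / (1 + δ)) * (a + b + c + d) ≤
        2 / (1 + δ) * (A + B + (1 - δ) / 2 * (a + d - b - c)) ∧
      2 / (1 + δ) * (A + B + (1 - δ) / 2 * (a + d - b - c)) ≤
        (1 + 2 * δ / (1 + δ)) * (a + b + c + d) := by
  have hpos : 1 + δ ≠ 0 := by linarith
  constructor
  · have hrw : (1 - 2 * δ / (1 + δ)) * (a + b + c + d) =
        2 / (1 + δ) * ((1 - δ) / 2 * (a + b + c + d)) := by
      field_simp
      ring
    rw [hrw]
    gcongr
    linarith [hA.1, hB.1]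
  · have hrw : (1 + 2 * δ / (1 + δ)) * (a + b + c + d) =
        2 / (1 + δ) * ((1 + 3 * δ) / 2 * (a + b + c + d)) := by
      field_simp
      ring
    rw [hrw]
    gcongr
    nlinarith [hA.2, hB.2]

section Lift

open Matrix

variable {n m r s t : ℕ} {δ κ μ : ℝ} {f : Matrix (Fin n) (Fin m) ℝ → ℝ}

lemma tilF_fromRows_mul_transpose (f : Matrix (Fin n) (Fin m) ℝ → ℝ) (μ : ℝ)
    (U : Matrix (Fin n) (Fin r) ℝ) (V : Matrix (Fin m) (Fin r) ℝ) :
    tilF f μ (fromRows U V * (fromRows U V)ᵀ) =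
      2 * (f (U * Vᵀ) + μ / 4 * ‖Uᵀ * U - Vᵀ * V‖ ^ 2) := by
  rw [transpose_fromRows, fromRows_mul_fromCols, tilF, frobenius_norm_sq_gram_sub_gram]
  simp only [toBlocks_fromBlocks₁₁, toBlocks_fromBlocks₁₂, toBlocks_fromBlocks₂₁,
    toBlocks_fromBlocks₂₂, transpose_mul, transpose_transpose]
  rw [← frobenius_norm_transpose (V * Uᵀ), transpose_mul, transpose_transpose]
  ring

lemma contDiff_tilF (hf : ContDiff ℝ 2 f) : ContDiff ℝ 2 (tilF f μ) := by
  unfold tilF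
  fun_prop

lemma hess_tilF (hf : ContDiff ℝ 2 f) (N K L : Matrix (Fin n ⊕ Fin m) (Fin n ⊕ Fin m) ℝ) :
    hess (tilF f μ) N K L =
      hess f N.toBlocks₁₂ K.toBlocks₁₂ L.toBlocks₁₂ +
        hess f N.toBlocks₂₁ᵀ K.toBlocks₂₁ᵀ L.toBlocks₂₁ᵀ +
      μ * (minner K.toBlocks₁₁ L.toBlocks₁₁ + minner K.toBlocks₂₂ L.toBlocks₂₂ -
        minner K.toBlocks₁₂ L.toBlocks₁₂ - minner K.toBlocks₂₁ L.toBlocks₂₁) := by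
  unfold tilF
  rw [hess_add (by fun_prop) (by fun_prop), hess_add (by fun_prop) (by fun_prop),
    hess_const_mul _ (by fun_prop), hess_sub (by fun_prop) (by fun_prop),
    hess_sub (by fun_prop) (by fun_prop), hess_add (by fun_prop) (by fun_prop),
    hess_comp_isLinearMap isLinearMap_toBlocks₁₂ hf N K L,
    hess_comp_isLinearMap isLinearMap_toBlocks₂₁_transpose hf N K L,
    hess_frobenius_norm_sq_comp isLinearMap_toBlocks₁₁,
    hess_frobenius_norm_sq_comp isLinearMap_toBlocks₂₂,
    hess_frobenius_norm_sq_comp isLinearMap_toBlocks₁₂,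
    hess_frobenius_norm_sq_comp isLinearMap_toBlocks₂₁]
  ring

lemma RIP.tilF_lift (hδ : 0 ≤ δ) (hf : ContDiff ℝ 2 f) (hrip : RIP r s δ f) :
    RIP r s (2 * δ / (1 + δ)) fun N => 2 / (1 + δ) * tilF f ((1 - δ) / 2) N := by
  intro M K hM hK
  have h12 := hrip _ _ ((rank_toBlocks₁₂_le M).trans hM) ((rank_toBlocks₁₂_le K).trans hK)
  have h21 := hrip _ _ ((rank_toBlocks₂₁_transpose_le M).trans hM)
    ((rank_toBlocks₂₁_transpose_le K).trans hK)
  rw [frobenius_norm_transpose] at h21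
  rw [hess_const_mul _ (contDiff_tilF hf), hess_tilF hf, frobenius_norm_sq_eq_blocks K]
  simp only [← frobenius_norm_sq_eq_minner]
  exact lift_rip_bounds hδ (sq_nonneg _) (sq_nonneg _) h12 h21

lemma BDP.tilF_lift (hδ : 0 ≤ δ) (hκ : 0 ≤ κ) (hf : ContDiff ℝ 2 f) (hbdp : BDP t κ f) :
    BDP t (2 * κ / (1 + δ)) fun N => 2 / (1 + δ) * tilF f ((1 - δ) / 2) N := by
  intro M M' K L hM hM' hK hL
  have h12 := hbdp _ _ _ _ ((rank_toBlocks₁₂_le M).trans hM) ((rank_toBlocks₁₂_le M').trans hM')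
    ((rank_toBlocks₁₂_le K).trans hK) ((rank_toBlocks₁₂_le L).trans hL)
  have h21 := hbdp _ _ _ _ ((rank_toBlocks₂₁_transpose_le M).trans hM)
    ((rank_toBlocks₂₁_transpose_le M').trans hM') ((rank_toBlocks₂₁_transpose_le K).trans hK)
    ((rank_toBlocks₂₁_transpose_le L).trans hL)
  rw [frobenius_norm_transpose, frobenius_norm_transpose] at h21
  rw [hess_const_mul _ (contDiff_tilF hf), hess_const_mul _ (contDiff_tilF hf), hess_tilF hf,
    hess_tilF hf, ← mul_sub, abs_mul, abs_of_nonneg (by positivity), mul_div_right_comm,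
    mul_assoc, mul_assoc]
  gcongr
  calc _ ≤ κ * ‖K.toBlocks₁₂‖ * ‖L.toBlocks₁₂‖ + κ * ‖K.toBlocks₂₁‖ * ‖L.toBlocks₂₁‖ := by
        refine le_trans (le_of_eq ?_) ((abs_add_le _ _).trans (add_le_add h12 h21))
        ring_nf
    _ ≤ κ * (‖K‖ * ‖L‖) := by
        rw [mul_assoc, mul_assoc, ← mul_add]
        exact mul_le_mul_of_nonneg_left (norm_toBlocks₁₂_mul_add_norm_toBlocks₂₁_mul_le K L) hκ

end Lift

theorem statement16_general (n m r s t : ℕ) (δ κ : ℝ) (hδ0 : 0 ≤ δ) (hκ : 0 ≤ κ)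
    (f : Matrix (Fin n) (Fin m) ℝ → ℝ) (hf : ContDiff ℝ 2 f)
    (hrip : RIP r s δ f) (hbdp : BDP t κ f) :
    (∀ (U : Matrix (Fin n) (Fin r) ℝ) (V : Matrix (Fin m) (Fin r) ℝ),
      tilF f ((1 - δ) / 2) (Matrix.fromRows U V * (Matrix.fromRows U V)ᵀ) =
        2 * (f (U * Vᵀ) + (1 - δ) / 2 / 4 * ‖Uᵀ * U - Vᵀ * V‖ ^ 2)) ∧
    RIP r s (2 * δ / (1 + δ)) (fun N => 2 / (1 + δ) * tilF f ((1 - δ) / 2) N) ∧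
    BDP t (2 * κ / (1 + δ)) (fun N => 2 / (1 + δ) * tilF f ((1 - δ) / 2) N) :=
  ⟨tilF_fromRows_mul_transpose f _, hrip.tilF_lift hδ0 hf, hbdp.tilF_lift hδ0 hκ hf⟩

/-- Transformation of an asymmetric problem with `δ`-RIP₂ᵣ,₂ₛ and `κ`-BDP₂ₜ into an
equivalent symmetric problem with `2δ/(1+δ)`-RIP₂ᵣ,₂ₛ and `2κ/(1+δ)`-BDP₂ₜ, using
`μ = (1-δ)/2`. -/
theorem statement16 (n m r s t : ℕ) (δ κ : ℝ) (hδ0 : 0 ≤ δ) (hδ1 : δ < 1) (hκ : 0 ≤ κ)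
    (f : Matrix (Fin n) (Fin m) ℝ → ℝ) (hf : ContDiff ℝ 2 f)
    (hrip : RIP r s δ f) (hbdp : BDP t κ f) :
    (∀ (U : Matrix (Fin n) (Fin r) ℝ) (V : Matrix (Fin m) (Fin r) ℝ),
      tilF f ((1 - δ) / 2) (Matrix.fromRows U V * (Matrix.fromRows U V)ᵀ) =
        2 * (f (U * Vᵀ) + (1 - δ) / 2 / 4 * ‖Uᵀ * U - Vᵀ * V‖ ^ 2)) ∧
    RIP r s (2 * δ / (1 + δ)) (fun N => 2 / (1 + δ) * tilF f ((1 - δ) / 2) N) ∧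
    BDP t (2 * κ / (1 + δ)) (fun N => 2 / (1 + δ) * tilF f ((1 - δ) / 2) N) :=
  statement16_general n m r s t δ κ hδ0 hκ f hf hrip hbdp
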